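/- Let F₁, F₂ ≤ F₀ be fields and write F = F₁ ∩ F₂. Let 𝒱 = (V₀, V₁, V₂) be a vector space patching problem for (F₀, F₁, F₂): finite dimensional Fᵢ-vector spaces Vᵢ together with Fᵢ-linear maps νᵢ : Vᵢ → V₀ (i = 1,2) such that the induced F₀-linear maps Vᵢ ⊗_{Fᵢ} F₀ → V₀ are isomorphisms. Let V = V₁ ∩ V₂ inside V₀ (identifying Vᵢ with its image under νᵢ). Then the patching problem 𝒱 has a solution if and only if dim_F V equals the common dimension dim_{Fᵢ} Vᵢ of the patching problem; and in this case, V is a solution. -/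

import Mathlib

/-!
The key point is that `V ⊗_F F₀ → V₀` is injective, i.e. `F`-linearly independent vectors of
`V = V₁ ∩ V₂` stay independent over `F₀`. As `V₀ = Vᵢ ⊗_{Fᵢ} F₀`, a vector of `Vᵢ` in the
`F₀`-span of vectors of `Vᵢ` already lies in their `Fᵢ`-span. So if a vector of `V` lay in the
`F₀`-span of `F₀`-independent vectors of `V`, its coefficients, being unique, would lie in
`F₁ ∩ F₂ = F`. Hence `dim_F V ≤ n`, the dimension of the problem, while a solution `W` embeds
into `V` by `w ↦ 1 ⊗ w`, so that `dim_F V ≥ dim_F W = n`. Conversely, if `dim_F V = n`, the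
injective maps `V ⊗_F Fᵢ → Vᵢ` are isomorphisms by counting dimensions.
-/

open TensorProduct

section Solution

variable (F F₁ F₂ F₀ : Type) [Field F] [Field F₁] [Field F₂] [Field F₀]
  [Algebra F F₁] [Algebra F F₂] [Algebra F F₀] [Algebra F₁ F₀] [Algebra F₂ F₀]
  [IsScalarTower F F₁ F₀] [IsScalarTower F F₂ F₀]
  (V₀ V₁ V₂ : Type) [AddCommGroup V₀] [Module F₀ V₀]
  [AddCommGroup V₁] [Module F₁ V₁] [AddCommGroup V₂] [Module F₂ V₂]
  [Module F₁ V₀] [IsScalarTower F₁ F₀ V₀] [Module F₂ V₀] [IsScalarTower F₂ F₀ V₀]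
  (ν₁ : V₁ →ₗ[F₁] V₀) (ν₂ : V₂ →ₗ[F₂] V₀)

/-- `W` is a solution of the patching problem `(V₀, V₁, V₂; ν₁, ν₂)`: it is a finite
dimensional `F`-vector space equipped with compatible isomorphisms
`W ⊗_F Fᵢ ≅ Vᵢ` (`i = 0, 1, 2`); i.e. the patching problem induced by `W` is
isomorphic to the given one. -/
def IsPatchingSolution (W : Type) [AddCommGroup W] [Module F W] : Prop :=
  FiniteDimensional F W ∧
  ∃ (α₁ : (F₁ ⊗[F] W) ≃ₗ[F₁] V₁) (α₂ : (F₂ ⊗[F] W) ≃ₗ[F₂] V₂)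
      (α₀ : (F₀ ⊗[F] W) ≃ₗ[F₀] V₀),
    (LinearMap.liftBaseChange F₀ ν₁ ∘ₗ LinearMap.baseChange F₀ α₁.toLinearMap =
      α₀.toLinearMap ∘ₗ (AlgebraTensorModule.cancelBaseChange F F₁ F₀ F₀ W).toLinearMap) ∧
    (LinearMap.liftBaseChange F₀ ν₂ ∘ₗ LinearMap.baseChange F₀ α₂.toLinearMap =
      α₀.toLinearMap ∘ₗ (AlgebraTensorModule.cancelBaseChange F F₂ F₀ F₀ W).toLinearMap)

end Solution

open Submodule Set

section BaseChange

variable {F K M N ι : Type*} [Field F] [Field K] [Algebra F K]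
  [AddCommGroup M] [Module F M] [AddCommGroup N] [Module K N] [Module F N] [IsScalarTower F K N]

theorem LinearMap.injective_liftBaseChange_iff_linearIndependent (b : Module.Basis ι F M)
    (j : M →ₗ[F] N) : Function.Injective (j.liftBaseChange K) ↔ LinearIndependent K (j ∘ b) := by
  have hb : j.liftBaseChange K ∘ b.baseChange K = j ∘ b := by
    ext i
    simp
  constructor
  · intro h
    rw [← hb]
    exact (b.baseChange K).linearIndependent.map' _ (LinearMap.ker_eq_bot.2 h)
  · intro h
    have : j.liftBaseChange K = (b.baseChange K).constr K (j ∘ b) :=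
      (b.baseChange K).ext fun i =>
        (congrFun hb i).trans ((b.baseChange K).constr_basis K _ i).symm
    rw [this]
    exact (b.baseChange K).injective_constr_of_linearIndependent h

theorem LinearMap.finiteDimensional_of_injective_liftBaseChange [FiniteDimensional K N]
    (j : M →ₗ[F] N) (hj : Function.Injective (j.liftBaseChange K)) : FiniteDimensional F M :=
  let b := Module.Basis.ofVectorSpace F M
  have := ((j.injective_liftBaseChange_iff_linearIndependent b).1 hj).finite
  .of_basis b

theorem LinearMap.injective_of_injective_liftBaseChange (j : M →ₗ[F] N)
    (hj : Function.Injective (j.liftBaseChange K)) : Function.Injective j := by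
  have : (j : M → N) = j.liftBaseChange K ∘ TensorProduct.mk F K M 1 := by
    ext
    simp
  rw [this]
  exact hj.comp (Module.FaithfullyFlat.tensorProduct_mk_injective M)

theorem LinearMap.finrank_eq_of_bijective_liftBaseChange (j : M →ₗ[F] N)
    (hj : Function.Bijective (j.liftBaseChange K)) : Module.finrank F M = Module.finrank K N := by
  rw [← Module.finrank_baseChange (R := K), (LinearEquiv.ofBijective _ hj).finrank_eq]

variable {L : Type*} [Field L] [Algebra F L] [Algebra K L]
  [Module L N] [IsScalarTower F L N] [IsScalarTower K L N]

theorem LinearMap.injective_liftBaseChange_of_injective_liftBaseChange (j : M →ₗ[F] N)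
    (hj : Function.Injective (j.liftBaseChange L)) : Function.Injective (j.liftBaseChange K) := by
  let b := Module.Basis.ofVectorSpace F M
  rw [j.injective_liftBaseChange_iff_linearIndependent b] at hj ⊢
  exact hj.restrict_scalars' K

theorem LinearMap.liftBaseChange_comp_baseChange_of_comp_eq [IsScalarTower F K L]
    {V' : Type*} [AddCommGroup V'] [Module K V'] (ν : V' →ₗ[K] N) (j : M →ₗ[F] N)
    (α : (K ⊗[F] M) →ₗ[K] V')
    (hα : ν ∘ₗ α = j.liftBaseChange K) :
    ν.liftBaseChange L ∘ₗ α.baseChange L =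
      j.liftBaseChange L ∘ₗ (AlgebraTensorModule.cancelBaseChange F K L L M).toLinearMap := by
  ext m
  simpa using LinearMap.congr_fun hα (1 ⊗ₜ m)

theorem LinearMap.exists_linearEquiv_comp_eq_liftBaseChange {V' : Type*} [AddCommGroup V']
    [Module K V'] [FiniteDimensional K V'] (ν : V' →ₗ[K] N) (hν : Function.Injective ν)
    (j : M →ₗ[F] N) (hj : Function.Injective (j.liftBaseChange K)) (hrange : ∀ m, j m ∈ range ν)
    (hdim : Module.finrank F M = Module.finrank K V') :
    ∃ α : (K ⊗[F] M) ≃ₗ[K] V', ν ∘ₗ α.toLinearMap = j.liftBaseChange K := by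
  have hle : LinearMap.range (j.liftBaseChange K) ≤ LinearMap.range ν := by
    rw [LinearMap.range_liftBaseChange, span_le]
    rintro _ ⟨m, rfl⟩
    exact hrange m
  let β := (LinearEquiv.ofInjective ν hν).symm.toLinearMap ∘ₗ
    (j.liftBaseChange K).codRestrict _ fun z => hle ⟨z, rfl⟩
  have hβ : ν ∘ₗ β = j.liftBaseChange K := by
    ext m
    simp [β]
  have hβinj : Function.Injective β := by
    rw [← hβ, LinearMap.coe_comp] at hj
    exact hj.of_comp
  have : FiniteDimensional K (K ⊗[F] M) := .of_injective β hβinj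
  have hrank : Module.finrank K (K ⊗[F] M) = Module.finrank K V' := by
    rw [Module.finrank_baseChange, hdim]
  have hβsurj := (LinearMap.injective_iff_surjective_of_finrank_eq_finrank hrank).1 hβinj
  exact ⟨.ofBijective β ⟨hβinj, hβsurj⟩, hβ⟩

end BaseChange

section Descent

variable {K L V' V₀ : Type*} [Field K] [Field L] [Algebra K L]
  [AddCommGroup V'] [Module K V'] [AddCommGroup V₀] [Module L V₀] [Module K V₀]
  [IsScalarTower K L V₀]

theorem LinearMap.mem_of_map_mem_span_of_injective_liftBaseChange (ν : V' →ₗ[K] V₀)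
    (hν : Function.Injective (ν.liftBaseChange L)) {U : Submodule K V'} {w : V'}
    (hw : ν w ∈ span L (ν '' U)) : w ∈ U := by
  have himage : ν '' U = ν.liftBaseChange L '' (TensorProduct.mk K L V' 1 '' U) := by
    rw [← Set.image_comp]
    congr 1
    ext
    simp
  rw [himage, ← Submodule.map_span] at hw
  obtain ⟨z, hz, hzw⟩ := hw
  rw [← ν.liftBaseChange_one_tmul (A := L)] at hzw
  obtain rfl := hν hzw
  -- The base change of `V' → V' ⧸ U` kills `1 ⊗ w`, and `V' ⧸ U → L ⊗ (V' ⧸ U)` is injective.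
  have hker : span L (TensorProduct.mk K L V' 1 '' U) ≤ LinearMap.ker (U.mkQ.baseChange L) :=
    span_le.2 <| by
      rintro _ ⟨u, hu, rfl⟩
      simp [(Submodule.Quotient.mk_eq_zero U).2 hu]
  rw [← Submodule.Quotient.mk_eq_zero]
  refine Module.FaithfullyFlat.tensorProduct_mk_injective (A := K) (B := L) _ ?_
  simpa using hker hz

theorem LinearMap.mem_span_of_mem_span_of_injective_liftBaseChange (ν : V' →ₗ[K] V₀)
    (hν : Function.Injective (ν.liftBaseChange L)) {t : Set V₀} (ht : t ⊆ range ν) {x : V₀}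
    (hx : x ∈ range ν) (hxt : x ∈ span L t) : x ∈ span K t := by
  obtain ⟨w, rfl⟩ := hx
  have himage : ν '' (span K (ν ⁻¹' t)) = span K t := by
    rw [← Submodule.map_coe, Submodule.map_span, image_preimage_eq_of_subset ht]
  have hL : ν w ∈ span L (ν '' span K (ν ⁻¹' t)) := by
    rwa [himage, Submodule.span_span_of_tower]
  rw [← SetLike.mem_coe, ← himage]
  exact mem_image_of_mem _ (ν.mem_of_map_mem_span_of_injective_liftBaseChange hν hL)

end Descent

theorem LinearIndependent.mem_span_inf {L V ι : Type*} [Field L] [AddCommGroup V] [Module L V]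
    {K₁ K₂ : Subfield L} {v : ι → V} (hv : LinearIndependent L v) {x : V}
    (h₁ : x ∈ span K₁ (range v)) (h₂ : x ∈ span K₂ (range v)) :
    x ∈ span ↥(K₁ ⊓ K₂) (range v) := by
  obtain ⟨c₁, rfl⟩ := Finsupp.mem_span_range_iff_exists_finsupp.1 h₁
  obtain ⟨c₂, hc⟩ := Finsupp.mem_span_range_iff_exists_finsupp.1 h₂
  have hcoeff : c₁.mapRange ((↑) : K₁ → L) rfl = c₂.mapRange ((↑) : K₂ → L) rfl := by
    apply hv
    simp only [Finsupp.linearCombination_apply, Finsupp.sum_mapRange_index, zero_smul,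
      implies_true]
    exact hc.symm
  refine Submodule.sum_mem _ fun i _ => ?_
  have hi : (c₁ i : L) ∈ K₁ ⊓ K₂ := by
    have := DFunLike.congr_fun hcoeff i
    simp only [Finsupp.mapRange_apply] at this
    exact ⟨(c₁ i).2, this ▸ (c₂ i).2⟩
  exact Submodule.smul_mem _ (⟨_, hi⟩ : ↥(K₁ ⊓ K₂)) (subset_span (mem_range_self i))

section Subfield

variable {F₀ V₀ V₁ V₂ : Type*} [Field F₀] [AddCommGroup V₀] [Module F₀ V₀] {F₁ F₂ : Subfield F₀}
  [AddCommGroup V₁] [Module F₁ V₁] [AddCommGroup V₂] [Module F₂ V₂]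
  {ν₁ : V₁ →ₗ[F₁] V₀} {ν₂ : V₂ →ₗ[F₂] V₀}

theorem linearIndependent_of_mem_range_inter {ι : Type*}
    (hν₁ : Function.Injective (ν₁.liftBaseChange F₀))
    (hν₂ : Function.Injective (ν₂.liftBaseChange F₀))
    {v : ι → V₀} (hvν : ∀ i, v i ∈ range ν₁ ∩ range ν₂)
    (hv : LinearIndependent ↥(F₁ ⊓ F₂) v) : LinearIndependent F₀ v := by
  rw [← linearIndepOn_univ_iff] at hv ⊢
  refine linearIndepOn_of_finite _ fun t _ ht => ?_
  induction t, ht using Set.Finite.induction_on with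
  | empty => exact linearIndepOn_empty _ _
  | @insert a t hat _ ih =>
    obtain ⟨-, hva⟩ := (linearIndepOn_insert hat).1 (hv.mono (subset_univ _))
    have ih := ih (subset_univ _)
    refine (linearIndepOn_insert hat).2 ⟨ih, fun ha => hva ?_⟩
    have h₁ := ν₁.mem_span_of_mem_span_of_injective_liftBaseChange hν₁
      (image_subset_iff.2 fun i _ => (hvν i).1) (hvν a).1 ha
    have h₂ := ν₂.mem_span_of_mem_span_of_injective_liftBaseChange hν₂
      (image_subset_iff.2 fun i _ => (hvν i).2) (hvν a).2 ha
    rw [image_eq_range] at h₁ h₂ ⊢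
    exact ih.mem_span_inf h₁ h₂

theorem Submodule.injective_liftBaseChange_subtype_of_subset_range_inter
    (hν₁ : Function.Injective (ν₁.liftBaseChange F₀))
    (hν₂ : Function.Injective (ν₂.liftBaseChange F₀))
    (V : Submodule ↥(F₁ ⊓ F₂) V₀) (hV : (V : Set V₀) ⊆ range ν₁ ∩ range ν₂) :
    Function.Injective (V.subtype.liftBaseChange F₀) := by
  let b := Module.Basis.ofVectorSpace ↥(F₁ ⊓ F₂) V
  rw [V.subtype.injective_liftBaseChange_iff_linearIndependent b]
  exact linearIndependent_of_mem_range_inter hν₁ hν₂ (fun i => hV (b i).2)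
    (b.linearIndependent.map' V.subtype V.ker_subtype)

end Subfield

section Patching

variable {F F₁ F₂ F₀ : Type} [Field F] [Field F₁] [Field F₂] [Field F₀]
  [Algebra F F₁] [Algebra F F₂] [Algebra F F₀] [Algebra F₁ F₀] [Algebra F₂ F₀]
  [IsScalarTower F F₁ F₀] [IsScalarTower F F₂ F₀]
  {V₀ V₁ V₂ : Type} [AddCommGroup V₀] [Module F₀ V₀]
  [AddCommGroup V₁] [Module F₁ V₁] [AddCommGroup V₂] [Module F₂ V₂]
  [Module F₁ V₀] [IsScalarTower F₁ F₀ V₀] [Module F₂ V₀] [IsScalarTower F₂ F₀ V₀]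
  {ν₁ : V₁ →ₗ[F₁] V₀} {ν₂ : V₂ →ₗ[F₂] V₀}
  {W : Type} [AddCommGroup W] [Module F W]

theorem IsPatchingSolution.finrank_eq (h : IsPatchingSolution F F₁ F₂ F₀ V₀ V₁ V₂ ν₁ ν₂ W) :
    Module.finrank F W = Module.finrank F₁ V₁ := by
  obtain ⟨-, α₁, -⟩ := h
  rw [← α₁.finrank_eq, Module.finrank_baseChange]

variable [Module F V₀] [IsScalarTower F F₀ V₀]

theorem IsPatchingSolution.exists_injective_mem_range_inter
    (h : IsPatchingSolution F F₁ F₂ F₀ V₀ V₁ V₂ ν₁ ν₂ W) :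
    ∃ j : W →ₗ[F] V₀, Function.Injective j ∧ ∀ w, j w ∈ range ν₁ ∩ range ν₂ := by
  obtain ⟨-, α₁, α₂, α₀, h₁, h₂⟩ := h
  refine ⟨α₀.toLinearMap.restrictScalars F ∘ₗ TensorProduct.mk F F₀ W 1,
    α₀.injective.comp (Module.FaithfullyFlat.tensorProduct_mk_injective W),
    fun w => ⟨⟨α₁ (1 ⊗ₜ w), ?_⟩, ⟨α₂ (1 ⊗ₜ w), ?_⟩⟩⟩
  · simpa using LinearMap.congr_fun h₁ (1 ⊗ₜ (1 ⊗ₜ w))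
  · simpa using LinearMap.congr_fun h₂ (1 ⊗ₜ (1 ⊗ₜ w))

theorem IsPatchingSolution.finrank_le (h : IsPatchingSolution F F₁ F₂ F₀ V₀ V₁ V₂ ν₁ ν₂ W)
    (V : Submodule F V₀) (hV : range ν₁ ∩ range ν₂ ⊆ V) [FiniteDimensional F V] :
    Module.finrank F₁ V₁ ≤ Module.finrank F V := by
  obtain ⟨j, hj, hjV⟩ := h.exists_injective_mem_range_inter
  rw [← h.finrank_eq]
  exact LinearMap.finrank_le_finrank_of_injective (f := j.codRestrict V fun w => hV (hjV w))
    fun _ _ e => hj (congrArg Subtype.val e)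

variable [IsScalarTower F F₁ V₀] [IsScalarTower F F₂ V₀]
  [FiniteDimensional F₀ V₀] [FiniteDimensional F₁ V₁] [FiniteDimensional F₂ V₂]

theorem isPatchingSolution_of_injective_liftBaseChange
    (hν₁ : Function.Bijective (ν₁.liftBaseChange F₀))
    (hν₂ : Function.Bijective (ν₂.liftBaseChange F₀))
    (j : W →ₗ[F] V₀) (hj : Function.Injective (j.liftBaseChange F₀))
    (hjν : ∀ w, j w ∈ range ν₁ ∩ range ν₂) (hdim : Module.finrank F W = Module.finrank F₁ V₁) :
    IsPatchingSolution F F₁ F₂ F₀ V₀ V₁ V₂ ν₁ ν₂ W := by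
  have hdim₁ := ν₁.finrank_eq_of_bijective_liftBaseChange hν₁
  have hdim₂ := ν₂.finrank_eq_of_bijective_liftBaseChange hν₂
  obtain ⟨α₁, h₁⟩ := ν₁.exists_linearEquiv_comp_eq_liftBaseChange
    (ν₁.injective_of_injective_liftBaseChange hν₁.1) j
    (j.injective_liftBaseChange_of_injective_liftBaseChange hj) (fun w => (hjν w).1) hdim
  obtain ⟨α₂, h₂⟩ := ν₂.exists_linearEquiv_comp_eq_liftBaseChange
    (ν₂.injective_of_injective_liftBaseChange hν₂.1) j
    (j.injective_liftBaseChange_of_injective_liftBaseChange hj) (fun w => (hjν w).2)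
    (by rw [hdim, hdim₁, hdim₂])
  obtain ⟨α₀, h₀⟩ := LinearMap.id.exists_linearEquiv_comp_eq_liftBaseChange
    Function.injective_id j hj (fun w => Set.mem_range_self (f := LinearMap.id) _)
    (hdim.trans hdim₁)
  rw [LinearMap.id_comp] at h₀
  refine ⟨j.finiteDimensional_of_injective_liftBaseChange hj, α₁, α₂, α₀, ?_, ?_⟩
  · rw [ν₁.liftBaseChange_comp_baseChange_of_comp_eq j _ h₁, h₀]
  · rw [ν₂.liftBaseChange_comp_baseChange_of_comp_eq j _ h₂, h₀]

end Patching

/-- Let `F₁, F₂ ≤ F₀` be fields and `F = F₁ ∩ F₂`.  A patching problem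
`(V₀, V₁, V₂; ν₁, ν₂)` of finite dimensional vector spaces (where the base-changed maps
`Vᵢ ⊗_{Fᵢ} F₀ → V₀` are isomorphisms) has a solution if and only if the dimension over `F`
of `V = V₁ ∩ V₂` (inside `V₀`) equals the common dimension of the patching problem;
and in that case `V` is a solution. -/
theorem patching_problem_solution_iff_dim
    (F₀ : Type) [Field F₀] (F₁ F₂ : Subfield F₀)
    (V₀ V₁ V₂ : Type) [AddCommGroup V₀] [Module F₀ V₀]
    [AddCommGroup V₁] [Module ↥F₁ V₁] [AddCommGroup V₂] [Module ↥F₂ V₂]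
    [FiniteDimensional F₀ V₀] [FiniteDimensional ↥F₁ V₁] [FiniteDimensional ↥F₂ V₂]
    (ν₁ : V₁ →ₗ[↥F₁] V₀) (ν₂ : V₂ →ₗ[↥F₂] V₀)
    (hν₁ : Function.Bijective (LinearMap.liftBaseChange F₀ ν₁))
    (hν₂ : Function.Bijective (LinearMap.liftBaseChange F₀ ν₂))
    (V : Submodule ↥(F₁ ⊓ F₂) V₀)
    (hV : (V : Set V₀) = Set.range ν₁ ∩ Set.range ν₂) :
    letI : Algebra ↥(F₁ ⊓ F₂) ↥F₁ :=
      (Subfield.inclusion (inf_le_left : F₁ ⊓ F₂ ≤ F₁)).toAlgebra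
    letI : Algebra ↥(F₁ ⊓ F₂) ↥F₂ :=
      (Subfield.inclusion (inf_le_right : F₁ ⊓ F₂ ≤ F₂)).toAlgebra
    letI : IsScalarTower ↥(F₁ ⊓ F₂) ↥F₁ F₀ := IsScalarTower.of_algebraMap_eq (fun x => rfl)
    letI : IsScalarTower ↥(F₁ ⊓ F₂) ↥F₂ F₀ := IsScalarTower.of_algebraMap_eq (fun x => rfl)
    ((∃ (W : Type) (_ : AddCommGroup W) (_ : Module ↥(F₁ ⊓ F₂) W),
        IsPatchingSolution ↥(F₁ ⊓ F₂) ↥F₁ ↥F₂ F₀ V₀ V₁ V₂ ν₁ ν₂ W) ↔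
      Module.finrank ↥(F₁ ⊓ F₂) ↥V = Module.finrank ↥F₁ V₁) ∧
    (Module.finrank ↥(F₁ ⊓ F₂) ↥V = Module.finrank ↥F₁ V₁ →
      IsPatchingSolution ↥(F₁ ⊓ F₂) ↥F₁ ↥F₂ F₀ V₀ V₁ V₂ ν₁ ν₂ ↥V) := by
  let : Algebra ↥(F₁ ⊓ F₂) F₁ := (Subfield.inclusion inf_le_left).toAlgebra
  let : Algebra ↥(F₁ ⊓ F₂) F₂ := (Subfield.inclusion inf_le_right).toAlgebra
  have : IsScalarTower ↥(F₁ ⊓ F₂) F₁ F₀ := .of_algebraMap_eq fun _ => rfl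
  have : IsScalarTower ↥(F₁ ⊓ F₂) F₂ F₀ := .of_algebraMap_eq fun _ => rfl
  have : IsScalarTower ↥(F₁ ⊓ F₂) F₁ V₀ := ⟨fun x y z => mul_smul (x : F₀) (y : F₀) z⟩
  have : IsScalarTower ↥(F₁ ⊓ F₂) F₂ V₀ := ⟨fun x y z => mul_smul (x : F₀) (y : F₀) z⟩
  have hφ := V.injective_liftBaseChange_subtype_of_subset_range_inter hν₁.1 hν₂.1 hV.subset
  have : FiniteDimensional ↥(F₁ ⊓ F₂) V :=
    V.subtype.finiteDimensional_of_injective_liftBaseChange hφ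
  have hle : Module.finrank ↥(F₁ ⊓ F₂) V ≤ Module.finrank F₁ V₁ := by
    rw [ν₁.finrank_eq_of_bijective_liftBaseChange hν₁, ← Module.finrank_baseChange (R := F₀)]
    exact LinearMap.finrank_le_finrank_of_injective hφ
  have hsol := isPatchingSolution_of_injective_liftBaseChange hν₁ hν₂ V.subtype hφ
    (fun x => hV.subset x.2)
  exact ⟨⟨fun ⟨W, _, _, hW⟩ => hle.antisymm (hW.finrank_le V hV.superset),
    fun h => ⟨V, _, _, hsol h⟩⟩, hsol⟩
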